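/- Let μ be a probability measure on ℝ^d, let V ∈ St(d,r) and W ∈ St(d,d−r) satisfy V Vᵀ + W Wᵀ = I_d, and suppose the sliced Poincaré inequality holds for (μ, V) with constant C_P > 0. Let f_∞ : ℝ^d → ℝ be in L²(μ) and let f_L : ℝ^d → ℝ be continuously differentiable with f_L and ‖∇f_L‖ square-integrable with respect to μ. Define g⋆_L(x) := ∫ f_L(Vx + Wz) μ_{Z|X}(dz|x), where (μ_{Z|X}(·|x))_x is a disintegration of the pushforward of μ under y ↦ (Vᵀy, Wᵀy). Then the single-level error decomposition holds: ‖f_∞ − g⋆_L ∘ (Vᵀ·)‖_{L²(μ)} ≤ ‖f_∞ − f_L‖_{L²(μ)} + C_P ‖(I_d − V Vᵀ) ∇f_L‖_{L²(μ;ℝ^d)}. -/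

import Mathlib

open MeasureTheory ProbabilityTheory Matrix
open scoped ProbabilityTheory

noncomputable section

/-- The gradient of `f : ℝ^d → ℝ` at `y`, as the vector of partial derivatives. -/
def grad {d : ℕ} (f : (Fin d → ℝ) → ℝ) (y : Fin d → ℝ) : Fin d → ℝ :=
  fun i => fderiv ℝ f y (Pi.single i 1)

/-- Squared Euclidean norm on `ℝ^d`. -/
def sqnorm {d : ℕ} (v : Fin d → ℝ) : ℝ := ∑ i, v i ^ 2

/-!
Split `f_∞ − g⋆∘Vᵀ = (f_∞ − f_L) + (f_L − g⋆∘Vᵀ)` and apply Minkowski's inequality. Since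
`y = V(Vᵀy) + W(Wᵀy)`, in the coordinates `(x, z) = (Vᵀy, Wᵀy)` the second term restricted to the
fibre over `x` is `z ↦ f_L(Vx + Wz)` minus its `κ x`-mean, with gradient `Wᵀ∇f_L(Vx + Wz)`. The
Poincaré inequality of `κ x` bounds it fibrewise, and integrating over `x` through the
disintegration gives `‖f_L − g⋆∘Vᵀ‖ ≤ C_P ‖Wᵀ∇f_L‖ = C_P ‖(I − VVᵀ)∇f_L‖`. The fibrewise bounds
are integrated as lower Lebesgue integrals, which is also what shows `f_L − g⋆∘Vᵀ ∈ L²`.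
-/

open scoped ENNReal

lemma sqnorm_nonneg {n : ℕ} (v : Fin n → ℝ) : 0 ≤ sqnorm v :=
  Finset.sum_nonneg fun _ _ => sq_nonneg _

lemma sqnorm_eq_dotProduct {n : ℕ} (v : Fin n → ℝ) : sqnorm v = v ⬝ᵥ v := by
  simp [sqnorm, dotProduct, sq]

@[fun_prop]
lemma continuous_sqnorm {n : ℕ} : Continuous (sqnorm : (Fin n → ℝ) → ℝ) :=
  continuous_finsetSum _ fun i _ => (continuous_apply i).pow 2

lemma sqnorm_mulVec {m n : ℕ} (A : Matrix (Fin m) (Fin n) ℝ) (v : Fin n → ℝ) :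
    sqnorm (A *ᵥ v) = v ⬝ᵥ (Aᵀ * A) *ᵥ v := by
  rw [sqnorm_eq_dotProduct, ← mulVec_mulVec, dotProduct_mulVec v Aᵀ, vecMul_transpose]

lemma sqnorm_mulVec_of_transpose_mul_self {m n : ℕ} {A : Matrix (Fin m) (Fin n) ℝ}
    (hA : Aᵀ * A = 1) (v : Fin n → ℝ) : sqnorm (A *ᵥ v) = sqnorm v := by
  rw [sqnorm_mulVec, hA, one_mulVec, sqnorm_eq_dotProduct]

section Decomposition

variable {d r s : ℕ} {V : Matrix (Fin d) (Fin r) ℝ} {W : Matrix (Fin d) (Fin s) ℝ}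

lemma mulVec_transpose_add_mulVec_transpose (hVW : V * Vᵀ + W * Wᵀ = 1) (y : Fin d → ℝ) :
    V *ᵥ (Vᵀ *ᵥ y) + W *ᵥ (Wᵀ *ᵥ y) = y := by
  rw [mulVec_mulVec, mulVec_mulVec, ← add_mulVec, hVW, one_mulVec]

lemma sqnorm_transpose_mulVec_add (hVW : V * Vᵀ + W * Wᵀ = 1) (y : Fin d → ℝ) :
    sqnorm (Vᵀ *ᵥ y) + sqnorm (Wᵀ *ᵥ y) = sqnorm y := by
  rw [sqnorm_mulVec, sqnorm_mulVec, transpose_transpose, transpose_transpose, ← dotProduct_add,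
    ← add_mulVec, hVW, one_mulVec, sqnorm_eq_dotProduct]

lemma sqnorm_transpose_mulVec_le (hVW : V * Vᵀ + W * Wᵀ = 1) (y : Fin d → ℝ) :
    sqnorm (Wᵀ *ᵥ y) ≤ sqnorm y := by
  linarith [sqnorm_transpose_mulVec_add hVW y, sqnorm_nonneg (Vᵀ *ᵥ y)]

lemma sqnorm_one_sub_mul_transpose_mulVec (hW : Wᵀ * W = 1) (hVW : V * Vᵀ + W * Wᵀ = 1)
    (y : Fin d → ℝ) : sqnorm ((1 - V * Vᵀ) *ᵥ y) = sqnorm (Wᵀ *ᵥ y) := by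
  rw [← hVW, add_sub_cancel_left, ← mulVec_mulVec, sqnorm_mulVec_of_transpose_mul_self hW]

end Decomposition

lemma continuous_grad {d : ℕ} {f : (Fin d → ℝ) → ℝ} (hf : ContDiff ℝ 1 f) :
    Continuous (grad f) :=
  continuous_pi fun _ => (hf.continuous_fderiv one_ne_zero).clm_apply continuous_const

lemma grad_sub_const {d : ℕ} (f : (Fin d → ℝ) → ℝ) (c : ℝ) :
    grad (fun y => f y - c) = grad f := by
  funext y i
  simp [grad, fderiv_sub_const]

lemma grad_const_add_mulVec {d s : ℕ} {f : (Fin d → ℝ) → ℝ} (W : Matrix (Fin d) (Fin s) ℝ)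
    (c : Fin d → ℝ) {z : Fin s → ℝ} (hf : DifferentiableAt ℝ f (c + W *ᵥ z)) :
    grad (fun w => f (c + W *ᵥ w)) z = Wᵀ *ᵥ grad f (c + W *ᵥ z) := by
  have hW : HasFDerivAt (fun w => c + W *ᵥ w) (mulVecLin W).toContinuousLinearMap z :=
    ((mulVecLin W).toContinuousLinearMap.hasFDerivAt).const_add c
  have hF : HasFDerivAt (fun w => f (c + W *ᵥ w))
      ((fderiv ℝ f (c + W *ᵥ z)).comp (mulVecLin W).toContinuousLinearMap) z :=
    hf.hasFDerivAt.comp z hW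
  funext i
  rw [grad, hF.fderiv]
  conv_lhs => rw [ContinuousLinearMap.comp_apply, LinearMap.coe_toContinuousLinearMap',
    mulVecLin_apply, pi_eq_sum_univ' (W *ᵥ Pi.single i 1), map_sum]
  simp [grad, mulVec, dotProduct, Pi.single_apply]

section L2

variable {α : Type*} [MeasurableSpace α] {μ : Measure α}

lemma lintegral_ofReal_sq_le_of_sqrt_integral_le {f g : α → ℝ} {C : ℝ} (hf : MemLp f 2 μ)
    (hg : Integrable g μ) (hg_nonneg : 0 ≤ g)
    (hfg : √(∫ y, f y ^ 2 ∂μ) ≤ C * √(∫ y, g y ∂μ)) :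
    ∫⁻ y, ENNReal.ofReal (f y ^ 2) ∂μ ≤ ENNReal.ofReal (C ^ 2) * ∫⁻ y, ENNReal.ofReal (g y) ∂μ := by
  have hsq : ∫ y, f y ^ 2 ∂μ ≤ C ^ 2 * ∫ y, g y ∂μ := by
    have := pow_le_pow_left₀ (Real.sqrt_nonneg _) hfg 2
    rwa [mul_pow, Real.sq_sqrt (integral_nonneg fun y => sq_nonneg (f y)),
      Real.sq_sqrt (integral_nonneg hg_nonneg)] at this
  rw [← ofReal_integral_eq_lintegral_ofReal hf.integrable_sq (ae_of_all _ fun y => sq_nonneg _),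
    ← ofReal_integral_eq_lintegral_ofReal hg (ae_of_all _ hg_nonneg),
    ← ENNReal.ofReal_mul (sq_nonneg C)]
  exact ENNReal.ofReal_le_ofReal hsq

lemma memLp_two_of_lintegral_ofReal_sq_le {f : α → ℝ} (hf : AEStronglyMeasurable f μ) {c : ℝ}
    (hfc : ∫⁻ y, ENNReal.ofReal (f y ^ 2) ∂μ ≤ ENNReal.ofReal c) : MemLp f 2 μ := by
  refine (memLp_two_iff_integrable_sq hf).mpr ⟨hf.pow 2, ?_⟩
  rw [hasFiniteIntegral_iff_ofReal (ae_of_all _ fun y => sq_nonneg _)]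
  exact hfc.trans_lt ENNReal.ofReal_lt_top

lemma integral_sq_le_of_lintegral_ofReal_sq_le {f : α → ℝ} (hf : AEStronglyMeasurable f μ)
    {c : ℝ} (hc : 0 ≤ c) (hfc : ∫⁻ y, ENNReal.ofReal (f y ^ 2) ∂μ ≤ ENNReal.ofReal c) :
    ∫ y, f y ^ 2 ∂μ ≤ c := by
  rw [integral_eq_lintegral_of_nonneg_ae (ae_of_all _ fun y => sq_nonneg _) (hf.pow 2),
    ← ENNReal.toReal_ofReal hc]
  exact ENNReal.toReal_mono ENNReal.ofReal_ne_top hfc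

lemma sqrt_integral_sq_add_le {f g : α → ℝ} (hf : MemLp f 2 μ) (hg : MemLp g 2 μ) :
    √(∫ y, (f y + g y) ^ 2 ∂μ) ≤ √(∫ y, f y ^ 2 ∂μ) + √(∫ y, g y ^ 2 ∂μ) := by
  have hL2 : ∀ {u : α → ℝ}, MemLp u 2 μ → eLpNorm u 2 μ = ENNReal.ofReal √(∫ y, u y ^ 2 ∂μ) := by
    intro u hu
    rw [hu.eLpNorm_eq_integral_rpow_norm two_ne_zero ENNReal.ofNat_ne_top, Real.sqrt_eq_rpow]
    norm_num
  have h := eLpNorm_add_le hf.aestronglyMeasurable hg.aestronglyMeasurable one_le_two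
  rw [hL2 (hf.add hg), hL2 hf, hL2 hg, ← ENNReal.ofReal_add (Real.sqrt_nonneg _)
    (Real.sqrt_nonneg _), ENNReal.ofReal_le_ofReal_iff (by positivity)] at h
  exact h

end L2

def SatisfiesPoincare {s : ℕ} (ρ : Measure (Fin s → ℝ)) (C : ℝ) : Prop :=
  ∀ h : (Fin s → ℝ) → ℝ, ContDiff ℝ 1 h → MemLp h 2 ρ →
    Integrable (fun z => sqnorm (grad h z)) ρ → ∫ z, h z ∂ρ = 0 →
    √(∫ z, h z ^ 2 ∂ρ) ≤ C * √(∫ z, sqnorm (grad h z) ∂ρ)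

lemma SatisfiesPoincare.lintegral_sq_sub_integral_le {s : ℕ} {ρ : Measure (Fin s → ℝ)}
    [IsProbabilityMeasure ρ] {C : ℝ} (hP : SatisfiesPoincare ρ C) {h : (Fin s → ℝ) → ℝ}
    (hh : ContDiff ℝ 1 h) (hh2 : MemLp h 2 ρ) (hgrad : Integrable (fun z => sqnorm (grad h z)) ρ) :
    ∫⁻ z, ENNReal.ofReal ((h z - ∫ w, h w ∂ρ) ^ 2) ∂ρ ≤
      ENNReal.ofReal (C ^ 2) * ∫⁻ z, ENNReal.ofReal (sqnorm (grad h z)) ∂ρ := by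
  have hcentered2 : MemLp (fun z => h z - ∫ w, h w ∂ρ) 2 ρ := hh2.sub (memLp_const _)
  have hgrad_centered := grad_sub_const h (∫ w, h w ∂ρ)
  have hmean : ∫ z, (h z - ∫ w, h w ∂ρ) ∂ρ = 0 := by
    simp [integral_sub (hh2.integrable one_le_two) (integrable_const _)]
  have hbound := hP _ (hh.sub contDiff_const) hcentered2 (hgrad_centered ▸ hgrad) hmean
  rw [hgrad_centered] at hbound
  exact lintegral_ofReal_sq_le_of_sqrt_integral_le hcentered2 hgrad (fun _ => sqnorm_nonneg _)
    hbound

section Disintegration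

variable {E X Z : Type*} [MeasurableSpace E] [MeasurableSpace X] [MeasurableSpace Z]
  {μ : Measure E} {ν : Measure X} [SFinite ν] {κ : Kernel X Z} [IsSFiniteKernel κ]
  {T : E → X × Z}

lemma ae_integrable_section_of_map_eq_compProd (hT : Measurable T) (hmap : μ.map T = ν ⊗ₘ κ)
    {F : X × Z → ℝ} (hF : StronglyMeasurable F) (hFT : Integrable (F ∘ T) μ) :
    ∀ᵐ x ∂ν, Integrable (fun z => F (x, z)) (κ x) := by
  rw [← integrable_map_measure hF.aestronglyMeasurable hT.aemeasurable, hmap] at hFT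
  exact ((Measure.integrable_compProd_iff hF.aestronglyMeasurable).mp hFT).1

lemma lintegral_comp_le_of_map_eq_compProd (hT : Measurable T) (hmap : μ.map T = ν ⊗ₘ κ)
    {F G : X × Z → ℝ≥0∞} (hF : Measurable F) (hG : Measurable G) {c : ℝ≥0∞}
    (hslice : ∀ᵐ x ∂ν, ∫⁻ z, F (x, z) ∂κ x ≤ c * ∫⁻ z, G (x, z) ∂κ x) :
    ∫⁻ y, F (T y) ∂μ ≤ c * ∫⁻ y, G (T y) ∂μ := by
  rw [← lintegral_map hF hT, ← lintegral_map hG hT, hmap, Measure.lintegral_compProd hF,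
    Measure.lintegral_compProd hG, ← lintegral_const_mul _ hG.lintegral_kernel_prod_right']
  exact lintegral_mono_ae hslice

end Disintegration

section Sliced

variable {d r s : ℕ} {V : Matrix (Fin d) (Fin r) ℝ} {W : Matrix (Fin d) (Fin s) ℝ}
  {κ : Kernel (Fin r → ℝ) (Fin s → ℝ)}

/-- The paper's `g⋆` for `f`. -/
def sliceMean (κ : Kernel (Fin r → ℝ) (Fin s → ℝ)) (V : Matrix (Fin d) (Fin r) ℝ)
    (W : Matrix (Fin d) (Fin s) ℝ) (f : (Fin d → ℝ) → ℝ) (x : Fin r → ℝ) : ℝ :=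
  ∫ z, f (V *ᵥ x + W *ᵥ z) ∂κ x

lemma measurable_sliceMean [IsSFiniteKernel κ] {f : (Fin d → ℝ) → ℝ} (hf : Continuous f) :
    Measurable (sliceMean κ V W f) :=
  (StronglyMeasurable.integral_kernel_prod_right' (by fun_prop : Continuous fun p :
    (Fin r → ℝ) × (Fin s → ℝ) => f (V *ᵥ p.1 + W *ᵥ p.2)).stronglyMeasurable).measurable

lemma SatisfiesPoincare.lintegral_sq_sub_sliceMean_le {x : Fin r → ℝ} [IsProbabilityMeasure (κ x)]
    {C : ℝ} (hP : SatisfiesPoincare (κ x) C) {f : (Fin d → ℝ) → ℝ} (hf : ContDiff ℝ 1 f)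
    (hf2 : Integrable (fun z => f (V *ᵥ x + W *ᵥ z) ^ 2) (κ x))
    (hgrad : Integrable (fun z => sqnorm (Wᵀ *ᵥ grad f (V *ᵥ x + W *ᵥ z))) (κ x)) :
    ∫⁻ z, ENNReal.ofReal ((f (V *ᵥ x + W *ᵥ z) - sliceMean κ V W f x) ^ 2) ∂κ x ≤
      ENNReal.ofReal (C ^ 2) *
        ∫⁻ z, ENNReal.ofReal (sqnorm (Wᵀ *ᵥ grad f (V *ᵥ x + W *ᵥ z))) ∂κ x := by
  have hgrad_slice : grad (fun z => f (V *ᵥ x + W *ᵥ z)) =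
      fun z => Wᵀ *ᵥ grad f (V *ᵥ x + W *ᵥ z) :=
    funext fun z => grad_const_add_mulVec W _ (hf.differentiable one_ne_zero _)
  have hslice : ContDiff ℝ 1 fun z => f (V *ᵥ x + W *ᵥ z) :=
    hf.comp (contDiff_const.add (mulVecLin W).toContinuousLinearMap.contDiff)
  have hslice2 : MemLp (fun z => f (V *ᵥ x + W *ᵥ z)) 2 (κ x) :=
    (memLp_two_iff_integrable_sq hslice.continuous.aestronglyMeasurable).mpr hf2
  have h := hP.lintegral_sq_sub_integral_le hslice hslice2 (hgrad_slice ▸ hgrad)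
  rwa [hgrad_slice] at h

lemma lintegral_sq_sub_sliceMean_comp_le {μ : Measure (Fin d → ℝ)} [IsFiniteMeasure μ]
    (hVW : V * Vᵀ + W * Wᵀ = 1) [IsMarkovKernel κ]
    (hdis : μ.map (fun y => (Vᵀ *ᵥ y, Wᵀ *ᵥ y)) = μ.map (Vᵀ *ᵥ ·) ⊗ₘ κ)
    {C : ℝ} (hP : ∀ᵐ x ∂(μ.map (Vᵀ *ᵥ ·)), SatisfiesPoincare (κ x) C)
    {f : (Fin d → ℝ) → ℝ} (hf : ContDiff ℝ 1 f) (hf2 : MemLp f 2 μ)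
    (hgrad : Integrable (fun y => sqnorm (Wᵀ *ᵥ grad f y)) μ) :
    ∫⁻ y, ENNReal.ofReal ((f y - sliceMean κ V W f (Vᵀ *ᵥ y)) ^ 2) ∂μ ≤
      ENNReal.ofReal (C ^ 2) * ∫⁻ y, ENNReal.ofReal (sqnorm (Wᵀ *ᵥ grad f y)) ∂μ := by
  have hT : Measurable fun y => (Vᵀ *ᵥ y, Wᵀ *ᵥ y) := by fun_prop
  have hf_cont := hf.continuous
  have hgrad_cont := continuous_grad hf
  have hrecon := mulVec_transpose_add_mulVec_transpose hVW
  have hf_sect := ae_integrable_section_of_map_eq_compProd hT hdis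
    (F := fun p => f (V *ᵥ p.1 + W *ᵥ p.2) ^ 2) (by fun_prop : Continuous _).stronglyMeasurable
    (by simpa only [Function.comp_def, hrecon] using hf2.integrable_sq)
  have hgrad_sect := ae_integrable_section_of_map_eq_compProd hT hdis
    (F := fun p => sqnorm (Wᵀ *ᵥ grad f (V *ᵥ p.1 + W *ᵥ p.2)))
    (by fun_prop : Continuous _).stronglyMeasurable
    (by simpa only [Function.comp_def, hrecon] using hgrad)
  have hslice : ∀ᵐ x ∂(μ.map (Vᵀ *ᵥ ·)),
      ∫⁻ z, ENNReal.ofReal ((f (V *ᵥ x + W *ᵥ z) - sliceMean κ V W f x) ^ 2) ∂κ x ≤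
        ENNReal.ofReal (C ^ 2) *
          ∫⁻ z, ENNReal.ofReal (sqnorm (Wᵀ *ᵥ grad f (V *ᵥ x + W *ᵥ z))) ∂κ x := by
    filter_upwards [hP, hf_sect, hgrad_sect] with x hPx hfx hgradx
    exact hPx.lintegral_sq_sub_sliceMean_le hf hfx hgradx
  have hmean := measurable_sliceMean (κ := κ) (V := V) (W := W) hf_cont
  have hF : Measurable fun p : (Fin r → ℝ) × (Fin s → ℝ) =>
      ENNReal.ofReal ((f (V *ᵥ p.1 + W *ᵥ p.2) - sliceMean κ V W f p.1) ^ 2) := by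
    fun_prop
  have hG : Measurable fun p : (Fin r → ℝ) × (Fin s → ℝ) =>
      ENNReal.ofReal (sqnorm (Wᵀ *ᵥ grad f (V *ᵥ p.1 + W *ᵥ p.2))) := by
    fun_prop
  simpa only [hrecon] using lintegral_comp_le_of_map_eq_compProd hT hdis hF hG hslice

end Sliced

theorem single_level_error_decomposition_general
    {d r s : ℕ} (μ : Measure (Fin d → ℝ)) [IsProbabilityMeasure μ]
    (V : Matrix (Fin d) (Fin r) ℝ) (W : Matrix (Fin d) (Fin s) ℝ)
    (hW : Wᵀ * W = 1)
    (hVW : V * Vᵀ + W * Wᵀ = 1)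
    (finf : (Fin d → ℝ) → ℝ) (hfinf : MemLp finf 2 μ)
    (fL : (Fin d → ℝ) → ℝ) (hfL : ContDiff ℝ 1 fL)
    (hfL2 : MemLp fL 2 μ)
    (hgradL2 : Integrable (fun y => sqnorm (grad fL y)) μ)
    -- disintegration of the pushforward of μ under y ↦ (Vᵀy, Wᵀy) w.r.t. its first marginal
    (κ : Kernel (Fin r → ℝ) (Fin s → ℝ)) [IsMarkovKernel κ]
    (hdis : μ.map (fun y => (Vᵀ.mulVec y, Wᵀ.mulVec y)) = (μ.map (Vᵀ.mulVec ·)) ⊗ₘ κ)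
    -- the sliced Poincaré inequality for (μ, V) with constant C_P
    (CP : ℝ) (hCP : 0 < CP)
    (hPoincare : ∀ᵐ x ∂(μ.map (Vᵀ.mulVec ·)), ∀ h : (Fin s → ℝ) → ℝ,
      ContDiff ℝ 1 h → MemLp h 2 (κ x) →
      Integrable (fun z => sqnorm (grad h z)) (κ x) →
      (∫ z, h z ∂(κ x)) = 0 →
      Real.sqrt (∫ z, (h z) ^ 2 ∂(κ x)) ≤
        CP * Real.sqrt (∫ z, sqnorm (grad h z) ∂(κ x)))
    -- the conditional average g⋆_L of f_L
    (gstarL : (Fin r → ℝ) → ℝ)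
    (hgstarL : ∀ x, gstarL x = ∫ z, fL (V.mulVec x + W.mulVec z) ∂(κ x)) :
    Real.sqrt (∫ y, (finf y - gstarL (Vᵀ.mulVec y)) ^ 2 ∂μ) ≤
      Real.sqrt (∫ y, (finf y - fL y) ^ 2 ∂μ) +
        CP * Real.sqrt
          (∫ y, sqnorm (((1 : Matrix (Fin d) (Fin d) ℝ) - V * Vᵀ).mulVec (grad fL y)) ∂μ) := by
  obtain rfl : gstarL = sliceMean κ V W fL := funext hgstarL
  have hgrad_cont := continuous_grad hfL
  have hgrad : Integrable (fun y => sqnorm (Wᵀ *ᵥ grad fL y)) μ := by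
    refine hgradL2.mono (by fun_prop : Continuous _).aestronglyMeasurable (ae_of_all _ fun y => ?_)
    simpa only [Real.norm_of_nonneg (sqnorm_nonneg _)] using
      sqnorm_transpose_mulVec_le hVW (grad fL y)
  have hkey : ∫⁻ y, ENNReal.ofReal ((fL y - sliceMean κ V W fL (Vᵀ *ᵥ y)) ^ 2) ∂μ ≤
      ENNReal.ofReal (CP ^ 2 * ∫ y, sqnorm (Wᵀ *ᵥ grad fL y) ∂μ) := by
    rw [ENNReal.ofReal_mul (sq_nonneg CP),
      ofReal_integral_eq_lintegral_ofReal hgrad (ae_of_all _ fun _ => sqnorm_nonneg _)]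
    exact lintegral_sq_sub_sliceMean_comp_le hVW hdis hPoincare hfL hfL2 hgrad
  have hv_meas : AEStronglyMeasurable (fun y => fL y - sliceMean κ V W fL (Vᵀ *ᵥ y)) μ :=
    (hfL.continuous.measurable.sub ((measurable_sliceMean hfL.continuous).comp
      (by fun_prop))).aestronglyMeasurable
  have hv_bound : √(∫ y, (fL y - sliceMean κ V W fL (Vᵀ *ᵥ y)) ^ 2 ∂μ) ≤
      CP * √(∫ y, sqnorm (Wᵀ *ᵥ grad fL y) ∂μ) := by
    calc _ ≤ √(CP ^ 2 * ∫ y, sqnorm (Wᵀ *ᵥ grad fL y) ∂μ) :=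
          Real.sqrt_le_sqrt (integral_sq_le_of_lintegral_ofReal_sq_le hv_meas
            (mul_nonneg (sq_nonneg CP) (integral_nonneg fun _ => sqnorm_nonneg _)) hkey)
      _ = _ := by rw [Real.sqrt_mul (sq_nonneg CP), Real.sqrt_sq hCP.le]
  simp_rw [sqnorm_one_sub_mul_transpose_mulVec hW hVW]
  calc _ = √(∫ y, ((finf y - fL y) + (fL y - sliceMean κ V W fL (Vᵀ *ᵥ y))) ^ 2 ∂μ) := by
        simp only [sub_add_sub_cancel]
    _ ≤ _ := sqrt_integral_sq_add_le (hfinf.sub hfL2)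
          (memLp_two_of_lintegral_ofReal_sq_le hv_meas hkey)
    _ ≤ _ := by gcongr

/-- the single-level error decomposition
`‖f_∞ − g⋆_L ∘ (Vᵀ·)‖_{L²(μ)} ≤ ‖f_∞ − f_L‖_{L²(μ)} + C_P ‖(I − V Vᵀ)∇f_L‖_{L²(μ;ℝ^d)}`. -/
theorem single_level_error_decomposition
    {d r s : ℕ} (μ : Measure (Fin d → ℝ)) [IsProbabilityMeasure μ]
    (V : Matrix (Fin d) (Fin r) ℝ) (W : Matrix (Fin d) (Fin s) ℝ)
    (hV : Vᵀ * V = 1) (hW : Wᵀ * W = 1)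
    (hVW : V * Vᵀ + W * Wᵀ = 1)
    (finf : (Fin d → ℝ) → ℝ) (hfinf : MemLp finf 2 μ)
    (fL : (Fin d → ℝ) → ℝ) (hfL : ContDiff ℝ 1 fL)
    (hfL2 : MemLp fL 2 μ)
    (hgradL2 : Integrable (fun y => sqnorm (grad fL y)) μ)
    -- disintegration of the pushforward of μ under y ↦ (Vᵀy, Wᵀy) w.r.t. its first marginal
    (κ : Kernel (Fin r → ℝ) (Fin s → ℝ)) [IsMarkovKernel κ]
    (hdis : μ.map (fun y => (Vᵀ.mulVec y, Wᵀ.mulVec y)) = (μ.map (Vᵀ.mulVec ·)) ⊗ₘ κ)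
    -- the sliced Poincaré inequality for (μ, V) with constant C_P
    (CP : ℝ) (hCP : 0 < CP)
    (hPoincare : ∀ᵐ x ∂(μ.map (Vᵀ.mulVec ·)), ∀ h : (Fin s → ℝ) → ℝ,
      ContDiff ℝ 1 h → MemLp h 2 (κ x) →
      Integrable (fun z => sqnorm (grad h z)) (κ x) →
      (∫ z, h z ∂(κ x)) = 0 →
      Real.sqrt (∫ z, (h z) ^ 2 ∂(κ x)) ≤
        CP * Real.sqrt (∫ z, sqnorm (grad h z) ∂(κ x)))
    -- the conditional average g⋆_L of f_L
    (gstarL : (Fin r → ℝ) → ℝ)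
    (hgstarL : ∀ x, gstarL x = ∫ z, fL (V.mulVec x + W.mulVec z) ∂(κ x)) :
    Real.sqrt (∫ y, (finf y - gstarL (Vᵀ.mulVec y)) ^ 2 ∂μ) ≤
      Real.sqrt (∫ y, (finf y - fL y) ^ 2 ∂μ) +
        CP * Real.sqrt
          (∫ y, sqnorm (((1 : Matrix (Fin d) (Fin d) ℝ) - V * Vᵀ).mulVec (grad fL y)) ∂μ) :=
  single_level_error_decomposition_general μ V W hW hVW finf hfinf fL hfL hfL2 hgradL2 κ hdis CP hCP
    hPoincare gstarL hgstarL
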